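/- arXiv:2510.08342 — 6 statements merged into one kernel-verified Lean document; each statement's English description precedes it below -/
import Mathlib

section
/- Curtis–Hedlund–Lyndon theorem for cellular transformata: let S, T be finite sets and d ∈ ℕ. A map F : S^{ℤ^d} → T^{ℤ^d} is continuous (for the product topologies) and commutes with every shift (F ∘ σ_v = σ_v ∘ F for all v ∈ ℤ^d) if and only if F is a cellular transformaton. -/
/-- Configurations of a `d`-dimensional cellular automaton over alphabet `S`. -/
abbrev Conf (d : ℕ) (S : Type) : Type := (Fin d → ℤ) → S

/-- The shift by a vector `v ∈ ℤ^d`: `(σ_v c)(w) = c(v + w)`. -/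
def shift {d : ℕ} {S : Type} (v : Fin d → ℤ) (c : Conf d S) : Conf d S :=
  fun w => c (v + w)

/-- A cellular transformaton (sliding block code). -/
def IsCellularTransformaton {d : ℕ} {S T : Type} (F : Conf d S → Conf d T) : Prop :=
  ∃ (k : ℕ) (n : Fin k → (Fin d → ℤ)) (f : (Fin k → S) → T),
    ∀ c v, F c v = f fun i => c (v + n i)


/-! A continuous map into a discrete space is locally determined by finitely many coordinates;
compactness of `S^{ℤ^d}` makes one finite window work for all configurations, and
shift-equivariance transports the resulting rule at the origin to every cell. -/

open Filter Topology

section FiniteDependence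

variable {ι T : Type*} {A : ι → Type*} [∀ i, TopologicalSpace (A i)]
  [TopologicalSpace T] [DiscreteTopology T] {g : (∀ i, A i) → T}

theorem Continuous.exists_finset_eq_of_restrict_eq (hg : Continuous g) (x : ∀ i, A i) :
    ∃ W : Finset ι, ∀ y, W.restrict y = W.restrict x → g y = g x := by
  have hx : g ⁻¹' {g x} ∈ 𝓝 x := (isOpen_discrete _).preimage hg |>.mem_nhds rfl
  rw [nhds_pi, mem_pi'] at hx
  obtain ⟨W, t, ht, hsub⟩ := hx
  refine ⟨W, fun y hy => hsub fun i hi => ?_⟩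
  rw [show y i = x i from congrFun hy ⟨i, hi⟩]
  exact mem_of_mem_nhds (ht i)

theorem Continuous.exists_finset_factorsThrough_restrict [∀ i, DiscreteTopology (A i)]
    [CompactSpace (∀ i, A i)] (hg : Continuous g) :
    ∃ W : Finset ι, g.FactorsThrough W.restrict := by
  let U (W : Finset ι) : Set (∀ i, A i) := {x | ∀ y, W.restrict y = W.restrict x → g y = g x}
  have hU_open (W : Finset ι) : IsOpen (U W) := by
    refine isOpen_iff_forall_mem_open.2 fun x hx => ⟨W.restrict ⁻¹' {W.restrict x}, ?_, ?_, rfl⟩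
    · intro z hz y hy
      rw [hx y (hy.trans hz), hx z hz]
    · exact (isOpen_discrete _).preimage W.continuous_restrict
  have hU_mono : Monotone U := fun W W' hWW' x hx y hy =>
    hx y (congrArg (Finset.restrict₂ hWW') hy)
  obtain ⟨W, hW⟩ := isCompact_univ.elim_directed_cover U hU_open
    (fun x _ => Set.mem_iUnion.2 (hg.exists_finset_eq_of_restrict_eq x)) hU_mono.directed_le
  exact ⟨W, fun x y hxy => hW (Set.mem_univ y) x hxy⟩

end FiniteDependence

theorem Function.FactorsThrough.exists_fin {ι α γ : Type*} {g : (ι → α) → γ} {W : Finset ι}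
    (hg : g.FactorsThrough W.restrict) :
    ∃ (k : ℕ) (n : Fin k → ι), g.FactorsThrough fun x i => x (n i) :=
  ⟨W.card, fun i => W.equivFin.symm i, fun x y hxy =>
    hg <| funext fun j => by simpa using congrFun hxy (W.equivFin j)⟩

section Cellular

variable {d : ℕ} {S T : Type}

theorem IsCellularTransformaton.of_isEmpty [IsEmpty S] (F : Conf d S → Conf d T) :
    IsCellularTransformaton F :=
  ⟨1, fun _ => 0, fun x => isEmptyElim (x 0), fun c _ => isEmptyElim (c 0)⟩

theorem apply_eq_apply_shift_zero {F : Conf d S → Conf d T}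
    (hF : ∀ v, F ∘ shift v = shift v ∘ F) (c : Conf d S) (v : Fin d → ℤ) :
    F c v = F (shift v c) 0 := by
  simpa [shift] using (congrFun (congrFun (hF v) c) 0).symm

theorem isCellularTransformaton_of_factorsThrough {F : Conf d S → Conf d T}
    (hF : ∀ v, F ∘ shift v = shift v ∘ F) {k : ℕ} (n : Fin k → (Fin d → ℤ))
    (hn : (fun c => F c 0).FactorsThrough fun c i => c (n i)) :
    IsCellularTransformaton F := by
  rcases isEmpty_or_nonempty T with hT | hT
  · have : IsEmpty S := ⟨fun s => isEmptyElim (F (fun _ => s) 0)⟩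
    exact .of_isEmpty F
  obtain ⟨f, hf⟩ := (Function.factorsThrough_iff _).1 hn
  exact ⟨k, n, f, fun c v => (apply_eq_apply_shift_zero hF c v).trans (congrFun hf _)⟩

theorem IsCellularTransformaton.continuous [TopologicalSpace S] [DiscreteTopology S]
    [TopologicalSpace T] {F : Conf d S → Conf d T} (hF : IsCellularTransformaton F) :
    Continuous F := by
  obtain ⟨k, n, f, hf⟩ := hF
  rw [show F = fun c v => f fun i => c (v + n i) from funext fun c => funext (hf c)]
  exact continuous_pi fun v =>
    continuous_of_discreteTopology.comp (continuous_pi fun i => continuous_apply _)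

theorem IsCellularTransformaton.comp_shift {F : Conf d S → Conf d T}
    (hF : IsCellularTransformaton F) (v : Fin d → ℤ) : F ∘ shift v = shift v ∘ F := by
  obtain ⟨k, n, f, hf⟩ := hF
  funext c w
  simp only [Function.comp_apply, shift, hf, add_assoc]

end Cellular

theorem curtis_hedlund_lyndon_general {d : ℕ} (S T : Type) [Finite S]
    [TopologicalSpace S] [DiscreteTopology S]
    [TopologicalSpace T] [DiscreteTopology T]
    (F : Conf d S → Conf d T) :
    (Continuous F ∧ ∀ v : Fin d → ℤ, F ∘ shift v = shift v ∘ F) ↔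
      IsCellularTransformaton F := by
  refine ⟨fun ⟨hcont, hshift⟩ => ?_, fun hF => ⟨hF.continuous, hF.comp_shift⟩⟩
  obtain ⟨W, hW⟩ := ((continuous_apply 0).comp hcont).exists_finset_factorsThrough_restrict
  obtain ⟨k, n, hn⟩ := hW.exists_fin
  exact isCellularTransformaton_of_factorsThrough hshift n hn

/-- **Curtis–Hedlund–Lyndon for cellular transformata.**
For finite alphabets `S, T` (with the discrete topology, configuration spaces carrying
the product topology), a map `F : S^{ℤ^d} → T^{ℤ^d}` is continuous and commutes with
every shift if and only if it is a cellular transformaton. -/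
theorem curtis_hedlund_lyndon {d : ℕ} (S T : Type) [Finite S] [Finite T]
    [TopologicalSpace S] [DiscreteTopology S]
    [TopologicalSpace T] [DiscreteTopology T]
    (F : Conf d S → Conf d T) :
    (Continuous F ∧ ∀ v : Fin d → ℤ, F ∘ shift v = shift v ∘ F) ↔
      IsCellularTransformaton F :=
  curtis_hedlund_lyndon_general S T F
end

section
/- Packing version of the Curtis–Hedlund–Lyndon theorem: let S, T be finite sets, let (P, V) and (Q, W) be tilings of ℤ^d with |P| = m and |Q| = m′ (with fixed enumerations), and let F : S^{ℤ^d} → T^{ℤ^d}. Since (P, V) is a tiling, the packing operator o^{⟨P,V⟩} : S^{ℤ^d} → (S^m)^{ℤ^d} is a bijection. Then the following are equivalent: (i) F is continuous and satisfies F ∘ σ_{M_V·v} = σ_{M_W·v} ∘ F for all v ∈ ℤ^d; (ii) the map G = o^{⟨Q,W⟩} ∘ F ∘ (o^{⟨P,V⟩})^{-1} : (S^m)^{ℤ^d} → (T^{m′})^{ℤ^d} is a cellular transformaton. -/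
/-- The pair `(p, M)` — an enumerated finite pattern `p : Fin m → ℤ^d` together with the
matrix `M = M_V` whose columns are `d` linearly independent vectors — is a tiling of
`ℤ^d`: every point of `ℤ^d` has a unique representation `p i + M·z`. -/
def IsTilingEnum {d m : ℕ} (p : Fin m → (Fin d → ℤ))
    (M : Matrix (Fin d) (Fin d) ℤ) : Prop :=
  ∀ x : Fin d → ℤ, ∃! q : Fin m × (Fin d → ℤ), x = p q.1 + M.mulVec q.2

/-- The packing operator `o^{⟨P,V⟩} : S^{ℤ^d} → (S^m)^{ℤ^d}` induced by an enumerated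
tiling `(p, M)`: `o(c)(z) = (c(p₁ + M·z), …, c(p_m + M·z))`. -/
def pack {d m : ℕ} {S : Type} (p : Fin m → (Fin d → ℤ))
    (M : Matrix (Fin d) (Fin d) ℤ) (c : Conf d S) : Conf d (Fin m → S) :=
  fun z i => c (p i + M.mulVec z)

/-! The classical Curtis–Hedlund–Lyndon theorem identifies cellular transformations with the
continuous shift-commuting maps: by compactness of `A^{ℤ^d}`, the continuous map `c ↦ H c 0` into
a discrete space depends only on a finite window, which serves as the neighbourhood of a local rule.
A tiling `(P, V)` identifies `ℤ^d × P` with `ℤ^d`, so packing is a homeomorphism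
`S^{ℤ^d} ≃ₜ (S^P)^{ℤ^d}` conjugating `σ_{M_V v}` to `σ_v`. Conjugating by the two packings reduces
the packed statement to the classical one. -/

open Function

theorem Continuous.exists_finset_dependsOn {ι B : Type*} {X : ι → Type*}
    [∀ i, TopologicalSpace (X i)] [∀ i, CompactSpace (X i)]
    [TopologicalSpace B] [DiscreteTopology B] {g : (∀ i, X i) → B} (hg : Continuous g) :
    ∃ s : Finset ι, DependsOn g s := by
  classical
  have box : ∀ x, ∃ (I : Finset ι) (u : ∀ i, Set (X i)),
      (∀ i ∈ I, IsOpen (u i) ∧ x i ∈ u i) ∧ (I : Set ι).pi u ⊆ g ⁻¹' {g x} :=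
    fun x => isOpen_pi_iff.mp ((isOpen_discrete _).preimage hg) x rfl
  choose I u hu hsub using box
  have hnhds : ∀ x ∈ Set.univ, (I x : Set ι).pi (u x) ∈ nhds x := fun x _ =>
    (isOpen_set_pi (I x).finite_toSet fun i hi => (hu x i hi).1).mem_nhds
      fun i hi => (hu x i hi).2
  obtain ⟨t, -, ht⟩ := isCompact_univ.elim_nhds_subcover _ hnhds
  refine ⟨t.biUnion I, fun x y hxy => ?_⟩
  obtain ⟨c, hct, hxc⟩ := Set.mem_iUnion₂.mp (ht (Set.mem_univ x))
  have hyc : y ∈ (I c : Set ι).pi (u c) := fun i hi =>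
    hxy i (Finset.mem_biUnion.mpr ⟨c, hct, hi⟩) ▸ hxc i hi
  exact (hsub c hxc).trans (hsub c hyc).symm

section CurtisHedlundLyndon

variable {d : ℕ} {A B : Type}

theorem IsCellularTransformaton.continuous_s4 [TopologicalSpace A] [DiscreteTopology A]
    [TopologicalSpace B] {H : Conf d A → Conf d B} (hH : IsCellularTransformaton H) :
    Continuous H := by
  obtain ⟨k, n, f, hf⟩ := hH
  rw [show H = fun c v => f fun i => c (v + n i) from funext₂ hf]
  exact continuous_pi fun v => continuous_of_discreteTopology.comp
    (continuous_pi fun i => continuous_apply _)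

theorem IsCellularTransformaton.semiconj_shift {H : Conf d A → Conf d B}
    (hH : IsCellularTransformaton H) (v : Fin d → ℤ) : Semiconj H (shift v) (shift v) := by
  obtain ⟨k, n, f, hf⟩ := hH
  intro c
  funext w
  simp only [shift, hf, add_assoc]

theorem isCellularTransformaton_of_continuous_of_semiconj [Finite A] [Nonempty A]
    [TopologicalSpace A] [DiscreteTopology A] [TopologicalSpace B] [DiscreteTopology B]
    {H : Conf d A → Conf d B} (hcont : Continuous H)
    (hshift : ∀ v, Semiconj H (shift v) (shift v)) : IsCellularTransformaton H := by
  classical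
  obtain ⟨s, hs⟩ := ((continuous_apply 0).comp hcont).exists_finset_dependsOn
  let e := s.equivFin
  refine ⟨s.card, fun i => e.symm i,
    fun a => H (fun x => if hx : x ∈ s then a (e ⟨x, hx⟩) else Classical.arbitrary A) 0,
    fun c v => ?_⟩
  have hH : H c v = H (shift v c) 0 := by
    rw [hshift v c, shift, add_zero]
  rw [hH]
  exact hs fun x hx => by simp [Finset.mem_coe.mp hx, shift, e]

theorem isCellularTransformaton_iff [Finite A] [Nonempty A]
    [TopologicalSpace A] [DiscreteTopology A] [TopologicalSpace B] [DiscreteTopology B]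
    {H : Conf d A → Conf d B} :
    IsCellularTransformaton H ↔ Continuous H ∧ ∀ v, Semiconj H (shift v) (shift v) :=
  ⟨fun hH => ⟨hH.continuous_s4, hH.semiconj_shift⟩,
    fun h => isCellularTransformaton_of_continuous_of_semiconj h.1 h.2⟩

end CurtisHedlundLyndon

section Packing

variable {d m : ℕ} {p : Fin m → (Fin d → ℤ)} {M : Matrix (Fin d) (Fin d) ℤ}

theorem IsTilingEnum.bijective (hP : IsTilingEnum p M) :
    Bijective fun z : (Fin d → ℤ) × Fin m => p z.2 + M.mulVec z.1 :=
  (bijective_iff_existsUnique _).mpr fun x => by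
    obtain ⟨⟨i, z⟩, hx, huniq⟩ := hP x
    exact ⟨(z, i), hx.symm, fun ⟨z', i'⟩ h => by simpa [and_comm] using huniq (i', z') h.symm⟩

noncomputable def IsTilingEnum.equiv (hP : IsTilingEnum p M) :
    (Fin d → ℤ) × Fin m ≃ (Fin d → ℤ) :=
  Equiv.ofBijective _ hP.bijective

noncomputable def IsTilingEnum.packHomeomorph {S : Type} [TopologicalSpace S]
    (hP : IsTilingEnum p M) : Conf d S ≃ₜ Conf d (Fin m → S) where
  toFun := pack p M
  invFun c x := c (hP.equiv.symm x).1 (hP.equiv.symm x).2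
  left_inv c := funext fun x => congrArg c (hP.equiv.apply_symm_apply x)
  right_inv c := funext₂ fun z i => by
    change c (hP.equiv.symm (hP.equiv (z, i))).1 (hP.equiv.symm (hP.equiv (z, i))).2 = c z i
    rw [Equiv.symm_apply_apply]
  continuous_toFun := by unfold pack; fun_prop
  continuous_invFun := by fun_prop

theorem IsTilingEnum.coe_packHomeomorph {S : Type} [TopologicalSpace S]
    (hP : IsTilingEnum p M) : ⇑(hP.packHomeomorph (S := S)) = pack p M :=
  rfl

theorem semiconj_pack_shift {S : Type} (v : Fin d → ℤ) :
    Semiconj (pack (S := S) p M) (shift (M.mulVec v)) (shift v) := fun c => by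
  funext z i
  simp only [pack, shift, Matrix.mulVec_add]
  congr 1
  abel

theorem IsTilingEnum.invFun_pack {S : Type} [TopologicalSpace S] [Nonempty S]
    (hP : IsTilingEnum p M) : invFun (pack (S := S) p M) = hP.packHomeomorph.symm :=
  invFun_eq_of_injective_of_rightInverse hP.packHomeomorph.injective
    hP.packHomeomorph.apply_symm_apply

end Packing

theorem Function.semiconj_equiv_conj_iff {α β γ δ : Type*} (e : α ≃ β) (e' : γ ≃ δ)
    {F : α → γ} {fa : α → α} {fb : β → β} {ga : γ → γ} {gb : δ → δ}
    (he : Semiconj e fa fb) (he' : Semiconj e' ga gb) :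
    Semiconj (e' ∘ F ∘ e.symm) fb gb ↔ Semiconj F fa ga := by
  refine ⟨fun h => ?_, fun h =>
    he'.comp_left (h.comp_left (he.inverse_left e.left_inv e.right_inv))⟩
  have hF : e'.symm ∘ (e' ∘ F ∘ e.symm) ∘ e = F := by
    funext x
    simp
  rw [← hF]
  exact (he'.inverse_left e'.left_inv e'.right_inv).comp_left (h.comp_left he)

theorem packed_curtis_hedlund_lyndon_general {d m m' : ℕ} (S T : Type)
    [Finite S] [Nonempty S] [TopologicalSpace S] [DiscreteTopology S]
    [TopologicalSpace T] [DiscreteTopology T]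
    (p : Fin m → (Fin d → ℤ)) (MV : Matrix (Fin d) (Fin d) ℤ)
    (hP : IsTilingEnum p MV)
    (q : Fin m' → (Fin d → ℤ)) (MW : Matrix (Fin d) (Fin d) ℤ)
    (hQ : IsTilingEnum q MW)
    (F : Conf d S → Conf d T) :
    (Continuous F ∧
        ∀ v : Fin d → ℤ, F ∘ shift (MV.mulVec v) = shift (MW.mulVec v) ∘ F) ↔
      IsCellularTransformaton
        (pack q MW ∘ F ∘ Function.invFun (pack (S := S) p MV)) := by
  rw [hP.invFun_pack, isCellularTransformaton_iff, ← hQ.coe_packHomeomorph]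
  refine and_congr ?_ (forall_congr' fun v => ?_)
  · rw [Homeomorph.comp_continuous_iff, Homeomorph.comp_continuous_iff']
  · rw [← semiconj_iff_comp_eq]
    exact (semiconj_equiv_conj_iff hP.packHomeomorph.toEquiv hQ.packHomeomorph.toEquiv
      (semiconj_pack_shift v) (semiconj_pack_shift v)).symm

/-- **packing version of Curtis–Hedlund–Lyndon.** Let `(P, V)` and
`(Q, W)` be tilings of `ℤ^d` with enumerations `p : Fin m → ℤ^d`, `q : Fin m' → ℤ^d`
and matrices `M_V`, `M_W`.  Since `(P, V)` is a tiling, `o^{⟨P,V⟩}` is a bijection.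
Then `F : S^{ℤ^d} → T^{ℤ^d}` is continuous and satisfies
`F ∘ σ_{M_V·v} = σ_{M_W·v} ∘ F` for all `v ∈ ℤ^d` if and only if
`G = o^{⟨Q,W⟩} ∘ F ∘ (o^{⟨P,V⟩})⁻¹` is a cellular transformaton. -/
theorem packed_curtis_hedlund_lyndon {d m m' : ℕ} (S T : Type)
    [Finite S] [Nonempty S] [TopologicalSpace S] [DiscreteTopology S]
    [Finite T] [TopologicalSpace T] [DiscreteTopology T]
    (p : Fin m → (Fin d → ℤ)) (MV : Matrix (Fin d) (Fin d) ℤ)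
    (hMV : MV.det ≠ 0) (hP : IsTilingEnum p MV)
    (q : Fin m' → (Fin d → ℤ)) (MW : Matrix (Fin d) (Fin d) ℤ)
    (hMW : MW.det ≠ 0) (hQ : IsTilingEnum q MW)
    (F : Conf d S → Conf d T) :
    (Continuous F ∧
        ∀ v : Fin d → ℤ, F ∘ shift (MV.mulVec v) = shift (MW.mulVec v) ∘ F) ↔
      IsCellularTransformaton
        (pack q MW ∘ F ∘ Function.invFun (pack (S := S) p MV)) :=
  packed_curtis_hedlund_lyndon_general S T p MV hP q MW hQ F
end

section
/- Reversible cellular automata cannot be globally universal: let d ∈ ℕ and let R = (S^{ℤ^d}, G) be a reversible d-dimensional cellular automaton, i.e., its global rule G : S^{ℤ^d} → S^{ℤ^d} is a bijection. Let A = ({0,1}^{ℤ^d}, F) be the cellular automaton whose global rule is the constant map F(c) = 0^{ℤ^d} (every cell in state 0) for all c. Then R does not globally simulate A: there exist no shift vector v, time delay τ, encoder E and decoder D satisfying the conditions of global simulation. -/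
/-- The pattern `u` on the finite region `R` appears in the configuration `c`. -/
def Appears {d : ℕ} {S : Type} (R : Finset (Fin d → ℤ)) (u : (Fin d → ℤ) → S)
    (c : Conf d S) : Prop :=
  ∃ v : Fin d → ℤ, ∀ w ∈ R, shift v c w = u w

/-- Subshifts of finite type: sets of configurations avoiding a finite list of patterns. -/
def IsSFT {d : ℕ} {S : Type} (X : Set (Conf d S)) : Prop :=
  ∃ (k : ℕ) (R : Fin k → Finset (Fin d → ℤ)) (u : Fin k → (Fin d → ℤ) → S),
    X = {c | ∀ i, ¬ Appears (R i) (u i) c}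

/-- The data `(v, τ, E, dom, D)` witnesses that the CA with global rule `G` globally
simulates the CA with global rule `F`; here `D` is a partial map with domain `dom`. -/
def GlobalSimWitness {d : ℕ} {S T : Type} [TopologicalSpace S] [TopologicalSpace T]
    (F : Conf d S → Conf d S) (G : Conf d T → Conf d T)
    (v : Fin d → ℤ) (τ : ℕ) (E : Conf d S → Conf d T)
    (dom : Set (Conf d T)) (D : Conf d T → Conf d S) : Prop :=
  -- the simulation equation `D(σ_v(G^τ(D⁻¹(c)))) = {F(c)}` (as partial-map images)
  (∀ c : Conf d S,
      (shift v ∘ G^[τ]) '' {x | x ∈ dom ∧ D x = c} ⊆ dom ∧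
      D '' ((shift v ∘ G^[τ]) '' {x | x ∈ dom ∧ D x = c}) = {F c}) ∧
  -- (i) the domain of `D` is a subshift of finite type
  IsSFT dom ∧
  -- (ii) `D` is continuous (on its domain)
  ContinuousOn D dom ∧
  -- (iii) a full-rank matrix `M` with `σ_w ∘ D = D ∘ σ_{M·w}` as partial maps
  (∃ M : Matrix (Fin d) (Fin d) ℤ, M.det ≠ 0 ∧
      ∀ (w : Fin d → ℤ) (x : Conf d T),
        (x ∈ dom ↔ shift (M.mulVec w) x ∈ dom) ∧
        (x ∈ dom → shift w (D x) = D (shift (M.mulVec w) x))) ∧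
  -- (iv) `D ∘ E = id`
  (∀ c : Conf d S, E c ∈ dom ∧ D (E c) = c) ∧
  -- (v) `E` is continuous
  Continuous E ∧
  -- (vi) full-rank matrices `M₁, M₂` with `σ_{M₂·w} ∘ E = E ∘ σ_{M₁·w}`
  (∃ M₁ M₂ : Matrix (Fin d) (Fin d) ℤ, M₁.det ≠ 0 ∧ M₂.det ≠ 0 ∧
      ∀ (w : Fin d → ℤ) (c : Conf d S),
        shift (M₂.mulVec w) (E c) = E (shift (M₁.mulVec w) c))


/-- The CA with global rule `G` globally simulates the CA with global rule `F`. -/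
def GloballySimulates {d : ℕ} {S T : Type} [TopologicalSpace S] [TopologicalSpace T]
    (G : Conf d T → Conf d T) (F : Conf d S → Conf d S) : Prop :=
  ∃ (v : Fin d → ℤ) (τ : ℕ) (E : Conf d S → Conf d T)
    (dom : Set (Conf d T)) (D : Conf d T → Conf d S),
    GlobalSimWitness F G v τ E dom D

/-!
Let `H = σ_v ∘ G^τ` be one simulation step. Since `G` is a bijective cellular automaton, `H` is
injective and commutes with all shifts, and the simulation of the constant rule forces `H` to map
the domain of the decoder into itself, landing only on configurations decoding to all `0`s.
The encoding `E(1^{ℤ^d})` of the all-`1` configuration is periodic, with period lattice containing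
`(det M₂) ℤ^d`. There are only finitely many configurations with a given period lattice, and `H`
permutes the finitely many periodic configurations in the domain; so `E(1^{ℤ^d})` is an `H`-image
of a point of the domain and hence decodes to all `0`s, contradicting `D ∘ E = id`.
-/

section Shift

variable {d : ℕ} {S : Type}

lemma shift_shift (a b : Fin d → ℤ) (c : Conf d S) : shift a (shift b c) = shift (b + a) c := by
  funext w
  simp only [shift, add_assoc]

lemma shift_zero (c : Conf d S) : shift (0 : Fin d → ℤ) c = c := by
  funext w
  simp only [shift, zero_add]

lemma commute_shift_shift (a b : Fin d → ℤ) :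
    Function.Commute (shift (S := S) a) (shift b) := fun c => by
  rw [shift_shift, shift_shift, add_comm]

lemma shift_injective (a : Fin d → ℤ) : Function.Injective (shift (S := S) a) := fun x y h => by
  simpa only [shift_shift, add_neg_cancel, shift_zero] using congrArg (shift (-a)) h

lemma IsCellularTransformaton.commute_shift {F : Conf d S → Conf d S}
    (hF : IsCellularTransformaton F) (a : Fin d → ℤ) : Function.Commute F (shift a) := by
  obtain ⟨k, n, f, hf⟩ := hF
  intro c
  funext w
  simp only [shift, hf, add_assoc]

lemma shift_det_smul_eq_of_forall_shift_mulVec_eq {M : Matrix (Fin d) (Fin d) ℤ} {x : Conf d S}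
    (hx : ∀ w, shift (M.mulVec w) x = x) (w : Fin d → ℤ) : shift (M.det • w) x = x := by
  have hdet : M.det • w = M.mulVec (M.adjugate.mulVec w) := by
    rw [Matrix.mulVec_mulVec, Matrix.mul_adjugate, Matrix.smul_mulVec, Matrix.one_mulVec]
  rw [hdet, hx]

/-- A configuration with period lattice `m ℤ^d` is determined by its values on `{0, …, |m| - 1}^d`,
parametrised here by `(ZMod |m|)^d`. -/
lemma finite_setOf_forall_shift_smul_eq [Finite S] {m : ℤ} (hm : m ≠ 0) :
    {x : Conf d S | ∀ w, shift (m • w) x = x}.Finite := by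
  have : NeZero m.natAbs := ⟨Int.natAbs_ne_zero.mpr hm⟩
  let restrict (x : Conf d S) : (Fin d → ZMod m.natAbs) → S := fun g => x fun i => ((g i).val : ℤ)
  have hreduce : ∀ x ∈ {x : Conf d S | ∀ w, shift (m • w) x = x}, ∀ w,
      x w = restrict x fun i => (w i : ZMod m.natAbs) := by
    intro x hx w
    have hw : m • (fun i => w i / m) + (fun i => ((w i : ZMod m.natAbs).val : ℤ)) = w := by
      funext i
      simp only [Pi.add_apply, Pi.smul_apply, smul_eq_mul, ZMod.val_intCast, Int.natCast_natAbs,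
        Int.emod_abs, Int.mul_ediv_add_emod]
    calc x w = shift (m • fun i => w i / m) x fun i => ((w i : ZMod m.natAbs).val : ℤ) := by
          rw [shift, hw]
      _ = restrict x fun i => (w i : ZMod m.natAbs) := by rw [hx]
  refine Set.Finite.of_finite_image (f := restrict) (Set.toFinite _) fun x hx y hy hxy => ?_
  funext w
  rw [hreduce x hx, hreduce y hy, hxy]

end Shift

/-- `H` maps the finite set of points of `X` with period lattice `m ℤ^d` injectively into itself,
hence onto itself. -/
lemma exists_mem_eq_of_forall_shift_smul_eq {d : ℕ} {S : Type} [Finite S]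
    {H : Conf d S → Conf d S} (hinj : Function.Injective H)
    (hcomm : ∀ a, Function.Commute H (shift a)) {X : Set (Conf d S)} (hX : Set.MapsTo H X X)
    {m : ℤ} (hm : m ≠ 0) {x : Conf d S} (hxX : x ∈ X) (hx : ∀ w, shift (m • w) x = x) :
    ∃ y ∈ X, H y = x := by
  let P := X ∩ {x | ∀ w, shift (m • w) x = x}
  have hP : P.Finite := (finite_setOf_forall_shift_smul_eq hm).subset Set.inter_subset_right
  have hmaps : Set.MapsTo H P P := fun y hy =>
    ⟨hX hy.1, fun w => by rw [← hcomm (m • w) y, hy.2 w]⟩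
  obtain ⟨y, hy, rfl⟩ := ((hP.injOn_iff_bijOn_of_mapsTo hmaps).mp hinj.injOn).surjOn ⟨hxX, hx⟩
  exact ⟨y, hy.1, rfl⟩

namespace GlobalSimWitness

variable {d : ℕ} {S T : Type} [TopologicalSpace S] [TopologicalSpace T]
  {F : Conf d S → Conf d S} {G : Conf d T → Conf d T} {v : Fin d → ℤ} {τ : ℕ}
  {E : Conf d S → Conf d T} {dom : Set (Conf d T)} {D : Conf d T → Conf d S}

lemma encode_mem (h : GlobalSimWitness F G v τ E dom D) (c : Conf d S) : E c ∈ dom :=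
  (h.2.2.2.2.1 c).1

lemma decode_encode (h : GlobalSimWitness F G v τ E dom D) (c : Conf d S) : D (E c) = c :=
  (h.2.2.2.2.1 c).2

lemma step_mem_and_decode_eq (h : GlobalSimWitness F G v τ E dom D) {x : Conf d T}
    (hx : x ∈ dom) : shift v (G^[τ] x) ∈ dom ∧ D (shift v (G^[τ] x)) = F (D x) := by
  obtain ⟨hsub, himg⟩ := h.1 (D x)
  have hstep : (shift v ∘ G^[τ]) x ∈ (shift v ∘ G^[τ]) '' {y | y ∈ dom ∧ D y = D x} :=
    Set.mem_image_of_mem _ ⟨hx, rfl⟩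
  have hdecode : D ((shift v ∘ G^[τ]) x) ∈ ({F (D x)} : Set (Conf d S)) :=
    himg ▸ Set.mem_image_of_mem D hstep
  exact ⟨hsub hstep, hdecode⟩

lemma exists_ne_zero_forall_shift_smul_encode_eq (h : GlobalSimWitness F G v τ E dom D)
    {c : Conf d S} (hc : ∀ a, shift a c = c) :
    ∃ m : ℤ, m ≠ 0 ∧ ∀ w, shift (m • w) (E c) = E c := by
  obtain ⟨-, -, -, -, -, -, M₁, M₂, -, hM₂, hE⟩ := h
  exact ⟨M₂.det, hM₂, shift_det_smul_eq_of_forall_shift_mulVec_eq fun w => by rw [hE, hc]⟩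

end GlobalSimWitness

theorem reversible_not_globally_universal_general {d : ℕ} (S : Type) [Finite S]
    [TopologicalSpace S]
    (G : Conf d S → Conf d S) (hG : IsCellularTransformaton G)
    (hrev : Function.Bijective G) :
    ¬ GloballySimulates G (fun _ : Conf d Bool => (fun _ => false : Conf d Bool)) := by
  rintro ⟨v, τ, E, dom, D, hsim⟩
  let H := shift v ∘ G^[τ]
  have hinj : Function.Injective H := (shift_injective v).comp (hrev.injective.iterate τ)
  have hcomm (a : Fin d → ℤ) : Function.Commute H (shift a) :=
    (commute_shift_shift v a).comp_left ((hG.commute_shift a).iterate_left τ)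
  let one : Conf d Bool := fun _ => true
  obtain ⟨m, hm, hper⟩ := hsim.exists_ne_zero_forall_shift_smul_encode_eq (c := one) fun _ => rfl
  obtain ⟨y, hy, hyE⟩ := exists_mem_eq_of_forall_shift_smul_eq hinj hcomm
    (fun x hx => (hsim.step_mem_and_decode_eq hx).1) hm (hsim.encode_mem one) hper
  have hfalse : D (E one) = fun _ => false := hyE ▸ (hsim.step_mem_and_decode_eq hy).2
  rw [hsim.decode_encode] at hfalse
  exact Bool.noConfusion (congrFun hfalse 0)

/-- A reversible cellular automaton (one whose global rule `G` is a
bijection) cannot globally simulate the CA on alphabet `{0,1}` whose global rule is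
the constant map to the all-`0` configuration. -/
theorem reversible_not_globally_universal {d : ℕ} (S : Type) [Finite S]
    [TopologicalSpace S] [DiscreteTopology S]
    (G : Conf d S → Conf d S) (hG : IsCellularTransformaton G)
    (hrev : Function.Bijective G) :
    ¬ GloballySimulates G (fun _ : Conf d Bool => (fun _ => false : Conf d Bool)) :=
  reversible_not_globally_universal_general S G hG hrev
end

section
/- For every 1D cellular automaton A = (S^ℤ, F) of radius 1 (with local rule f : S³ → S) there exists a one-way cellular automaton B = (T^ℤ, G) that simulates it in the following sense: take T = S ∪ (S × S), let g : T² → T satisfy g(s₁, s₂) = (s₁, s₂) whenever s₁, s₂ ∈ S and g((a,b), (b,c)) = f(a, b, c) for all a, b, c ∈ S (g arbitrary otherwise), and let G(c)(i) = g(c(i), c(i+1)). Then for every configuration c ∈ S^ℤ ⊆ T^ℤ one has σ_{−1}(G²(c)) = F(c). -/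
/-! One step of the one-way automaton stores in each cell the pair formed with its right
neighbour; a second step merges two overlapping pairs `(c i, c (i+1))`, `(c (i+1), c (i+2))`
into `f` of the window starting at `i`, and the shift by `-1` moves that value to the
window's centre `i + 1`. -/

/-- The shift on 1D configurations: `(σ_v c)(i) = c(v + i)`. -/
def shift1 {S : Type} (v : ℤ) (c : ℤ → S) : ℤ → S := fun i => c (v + i)

section OneWaySimulation

variable {S : Type} {g : (S ⊕ S × S) → (S ⊕ S × S) → (S ⊕ S × S)}
  {G : (ℤ → (S ⊕ S × S)) → ℤ → (S ⊕ S × S)}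

theorem oneWay_apply_inl_eq_inr_pair
    (hg₁ : ∀ s₁ s₂ : S, g (Sum.inl s₁) (Sum.inl s₂) = Sum.inr (s₁, s₂))
    (hG : ∀ (c : ℤ → (S ⊕ S × S)) (i : ℤ), G c i = g (c i) (c (i + 1))) (c : ℤ → S) :
    G (fun j => Sum.inl (c j)) = fun j => Sum.inr (c j, c (j + 1)) := by
  funext j
  rw [hG, hg₁]

theorem oneWay_apply_inr_pair_eq_inl {f : S → S → S → S}
    (hg₂ : ∀ a b c : S, g (Sum.inr (a, b)) (Sum.inr (b, c)) = Sum.inl (f a b c))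
    (hG : ∀ (c : ℤ → (S ⊕ S × S)) (i : ℤ), G c i = g (c i) (c (i + 1))) (c : ℤ → S) :
    G (fun j => Sum.inr (c j, c (j + 1))) =
      fun j => Sum.inl (f (c j) (c (j + 1)) (c (j + 1 + 1))) := by
  funext j
  rw [hG, hg₂]

end OneWaySimulation

theorem one_way_CA_simulation_general (S : Type)
    (f : S → S → S → S) (F : (ℤ → S) → ℤ → S)
    (hF : ∀ (c : ℤ → S) (i : ℤ), F c i = f (c (i - 1)) (c i) (c (i + 1)))
    (g : (S ⊕ S × S) → (S ⊕ S × S) → (S ⊕ S × S))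
    (hg₁ : ∀ s₁ s₂ : S, g (Sum.inl s₁) (Sum.inl s₂) = Sum.inr (s₁, s₂))
    (hg₂ : ∀ a b c : S, g (Sum.inr (a, b)) (Sum.inr (b, c)) = Sum.inl (f a b c))
    (G : (ℤ → (S ⊕ S × S)) → ℤ → (S ⊕ S × S))
    (hG : ∀ (c : ℤ → (S ⊕ S × S)) (i : ℤ), G c i = g (c i) (c (i + 1))) :
    ∀ c : ℤ → S,
      shift1 (-1) (G^[2] fun j => Sum.inl (c j)) = fun i => Sum.inl (F c i) := by
  intro c
  rw [Function.iterate_succ_apply, Function.iterate_one, oneWay_apply_inl_eq_inr_pair hg₁ hG,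
    oneWay_apply_inr_pair_eq_inl hg₂ hG]
  funext i
  rw [shift1, hF]
  congr 3 <;> ring_nf

/-- For every 1D CA `A = (S^ℤ, F)` of radius 1 with local rule
`f : S³ → S`, the one-way CA `B = (T^ℤ, G)` with `T = S ∪ (S × S)` and local rule `g`
satisfying `g(s₁, s₂) = (s₁, s₂)` for `s₁, s₂ ∈ S` and `g((a,b),(b,c)) = f(a,b,c)`
(arbitrary otherwise) simulates it: for every `c ∈ S^ℤ ⊆ T^ℤ`,
`σ₋₁(G²(c)) = F(c)`. -/
theorem one_way_CA_simulation (S : Type) [Finite S]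
    (f : S → S → S → S) (F : (ℤ → S) → ℤ → S)
    (hF : ∀ (c : ℤ → S) (i : ℤ), F c i = f (c (i - 1)) (c i) (c (i + 1)))
    (g : (S ⊕ S × S) → (S ⊕ S × S) → (S ⊕ S × S))
    (hg₁ : ∀ s₁ s₂ : S, g (Sum.inl s₁) (Sum.inl s₂) = Sum.inr (s₁, s₂))
    (hg₂ : ∀ a b c : S, g (Sum.inr (a, b)) (Sum.inr (b, c)) = Sum.inl (f a b c))
    (G : (ℤ → (S ⊕ S × S)) → ℤ → (S ⊕ S × S))
    (hG : ∀ (c : ℤ → (S ⊕ S × S)) (i : ℤ), G c i = g (c i) (c (i + 1))) :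
    ∀ c : ℤ → S,
      shift1 (-1) (G^[2] fun j => Sum.inl (c j)) = fun i => Sum.inl (F c i) :=
  one_way_CA_simulation_general S f F hF g hg₁ hg₂ G hG
end

section
/- For every 1D cellular automaton A = (S^ℤ, F) of radius 1 on a finite alphabet S, there exist a finite set T ⊂ ℕ, a 1D cellular automaton B = (T^ℤ, G) of radius 1 whose local rule g : T³ → T is totalistic (the value g(x, y, z) depends only on the sum x + y + z), and an injective continuous map E : S^ℤ → T^ℤ satisfying E ∘ σ_{4v} = σ_{4v} ∘ E for all v ∈ ℤ and G ∘ E = E ∘ F. -/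
namespace TotSim

variable {S : Type} [Nonempty S]

/-- encode a state as a nonzero digit -/
def dig {n : ℕ} (e : S ≃ Fin n) (s : S) : ℕ := (e s : ℕ) + 1

/-- digit at base-(n+1) position q -/
def dd (n q m : ℕ) : ℕ := m / (n+1) ^ q % (n+1)

noncomputable def dec {n : ℕ} (e : S ≃ Fin n) (q m : ℕ) : S :=
  if h : dd n q m - 1 < n then e.symm ⟨dd n q m - 1, h⟩ else Classical.arbitrary S

noncomputable def out {n : ℕ} (e : S ≃ Fin n) (f : S → S → S → S) (r m : ℕ) : ℕ :=
  dig e (f (dec e ((r+3)%4) m) (dec e r m) (dec e ((r+1)%4) m)) * (n+1) ^ r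

noncomputable def tot {n : ℕ} (e : S ≃ Fin n) (f : S → S → S → S) (m : ℕ) : ℕ :=
  if dd n 2 m = 0 then out e f 0 m else if dd n 3 m = 0 then out e f 1 m
  else if dd n 0 m = 0 then out e f 2 m else out e f 3 m

def T (n : ℕ) : Finset ℕ :=
  Finset.image (fun p : Fin n × Fin 4 => ((p.1 : ℕ)+1) * (n+1)^(p.2 : ℕ)) Finset.univ

lemma mem_T_of {n : ℕ} (i r : ℕ) (hi : i < n) (hr : r < 4) : (i+1) * (n+1)^r ∈ T n :=
  Finset.mem_image.2 ⟨(⟨i, hi⟩, ⟨r, hr⟩), Finset.mem_univ _, rfl⟩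

lemma out_mem {n : ℕ} (e : S ≃ Fin n) (f : S → S → S → S) (r m : ℕ) (hr : r < 4) :
    out e f r m ∈ T n :=
  mem_T_of _ _ (e _).isLt hr

lemma tot_mem {n : ℕ} (e : S ≃ Fin n) (f : S → S → S → S) (m : ℕ) :
    tot e f m ∈ T n := by
  rw [tot]; split_ifs <;> exact out_mem e f _ m (by norm_num)

lemma dec_dig {n : ℕ} (e : S ≃ Fin n) (q m : ℕ) (s : S) (h : dd n q m = dig e s) :
    dec e q m = s := by
  have h1 : dd n q m - 1 = (e s : ℕ) := by simp [h, dig]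
  have h2 : dd n q m - 1 < n := h1 ▸ (e s).isLt
  rw [dec, dif_pos h2]
  have : (⟨dd n q m - 1, h2⟩ : Fin n) = e s := Fin.ext h1
  rw [this, Equiv.symm_apply_apply]

lemma dig4 (M a b c d : ℕ) (hM : 0 < M) (ha : a < M) (hb : b < M) (hc : c < M) (hd : d < M) :
    (a + b*M + c*M^2 + d*M^3) % M = a ∧
    (a + b*M + c*M^2 + d*M^3) / M % M = b ∧
    (a + b*M + c*M^2 + d*M^3) / M^2 % M = c ∧
    (a + b*M + c*M^2 + d*M^3) / M^3 % M = d := by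
  have e1 : a + b*M + c*M^2 + d*M^3 = a + (b + c*M + d*M^2) * M := by ring
  have e2 : a + b*M + c*M^2 + d*M^3 = (a + b*M) + (c + d*M) * M^2 := by ring
  have e3 : a + b*M + c*M^2 + d*M^3 = (a + b*M + c*M^2) + d * M^3 := by ring
  have hab : a + b*M < M^2 := by nlinarith
  have habc : a + b*M + c*M^2 < M^3 := by nlinarith
  refine ⟨?_, ?_, ?_, ?_⟩
  · rw [e1, Nat.add_mul_mod_self_right, Nat.mod_eq_of_lt ha]
  · rw [e1, Nat.add_mul_div_right _ _ hM, Nat.div_eq_of_lt ha, Nat.zero_add,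
      show b + c*M + d*M^2 = b + (c + d*M)*M by ring, Nat.add_mul_mod_self_right,
      Nat.mod_eq_of_lt hb]
  · rw [e2, Nat.add_mul_div_right _ _ (by positivity), Nat.div_eq_of_lt hab, Nat.zero_add,
      Nat.add_mul_mod_self_right, Nat.mod_eq_of_lt hc]
  · rw [e3, Nat.add_mul_div_right _ _ (by positivity), Nat.div_eq_of_lt habc, Nat.zero_add,
      Nat.mod_eq_of_lt hd]

lemma key {n : ℕ} (e : S ≃ Fin n) (f : S → S → S → S) (s0 s1 s2 : S) (r : ℕ) (hr : r < 4) :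
    tot e f (dig e s0 * (n+1)^((r+3)%4) + dig e s1 * (n+1)^r + dig e s2 * (n+1)^((r+1)%4))
      = dig e (f s0 s1 s2) * (n+1)^r := by
  have b0 : dig e s0 < n+1 := Nat.succ_lt_succ (e s0).isLt
  have b1 : dig e s1 < n+1 := Nat.succ_lt_succ (e s1).isLt
  have b2 : dig e s2 < n+1 := Nat.succ_lt_succ (e s2).isLt
  have p0 : 0 < dig e s0 := Nat.succ_pos _
  have p1 : 0 < dig e s1 := Nat.succ_pos _
  have p2 : 0 < dig e s2 := Nat.succ_pos _
  interval_cases r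
  · -- r = 0 : digits a = s1 at 0, b = s2 at 1, c = 0, d = s0 at 3
    obtain ⟨q0, q1, q2, q3⟩ := dig4 (n+1) (dig e s1) (dig e s2) 0 (dig e s0)
      (by omega) b1 b2 (by omega) b0
    have hm : dig e s0 * (n+1)^((0+3)%4) + dig e s1 * (n+1)^0 + dig e s2 * (n+1)^((0+1)%4)
        = dig e s1 + dig e s2 * (n+1) + 0 * (n+1)^2 + dig e s0 * (n+1)^3 := by norm_num; try ring
    rw [hm]
    set m := dig e s1 + dig e s2 * (n+1) + 0 * (n+1)^2 + dig e s0 * (n+1)^3 with hmdef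
    have h2 : dd n 2 m = 0 := q2
    rw [tot, if_pos h2, out]
    rw [dec_dig e ((0+3)%4) _ s0 q3, dec_dig e 0 _ s1 (by simpa [dd] using q0),
      dec_dig e ((0+1)%4) _ s2 (by simpa [dd] using q1)]
  · -- r = 1 : digits s0 at 0, s1 at 1, s2 at 2, 0 at 3
    obtain ⟨q0, q1, q2, q3⟩ := dig4 (n+1) (dig e s0) (dig e s1) (dig e s2) 0
      (by omega) b0 b1 b2 (by omega)
    have hm : dig e s0 * (n+1)^((1+3)%4) + dig e s1 * (n+1)^1 + dig e s2 * (n+1)^((1+1)%4)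
        = dig e s0 + dig e s1 * (n+1) + dig e s2 * (n+1)^2 + 0 * (n+1)^3 := by norm_num; try ring
    rw [hm]
    set m := dig e s0 + dig e s1 * (n+1) + dig e s2 * (n+1)^2 + 0 * (n+1)^3 with hmdef
    have h2 : dd n 2 m ≠ 0 := by show ¬ (m / (n+1)^2 % (n+1) = 0); rw [q2]; omega
    have h3 : dd n 3 m = 0 := q3
    rw [tot, if_neg h2, if_pos h3, out]
    rw [dec_dig e ((1+3)%4) _ s0 (by simpa [dd] using q0), dec_dig e 1 _ s1 (by simpa [dd] using q1),
      dec_dig e ((1+1)%4) _ s2 q2]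
  · -- r = 2 : digits 0 at 0, s0 at 1, s1 at 2, s2 at 3
    obtain ⟨q0, q1, q2, q3⟩ := dig4 (n+1) 0 (dig e s0) (dig e s1) (dig e s2)
      (by omega) (by omega) b0 b1 b2
    have hm : dig e s0 * (n+1)^((2+3)%4) + dig e s1 * (n+1)^2 + dig e s2 * (n+1)^((2+1)%4)
        = 0 + dig e s0 * (n+1) + dig e s1 * (n+1)^2 + dig e s2 * (n+1)^3 := by norm_num; try ring
    rw [hm]
    set m := 0 + dig e s0 * (n+1) + dig e s1 * (n+1)^2 + dig e s2 * (n+1)^3 with hmdef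
    have h2 : dd n 2 m ≠ 0 := by show ¬ (m / (n+1)^2 % (n+1) = 0); rw [q2]; omega
    have h3 : dd n 3 m ≠ 0 := by show ¬ (m / (n+1)^3 % (n+1) = 0); rw [q3]; omega
    have h0 : dd n 0 m = 0 := by simpa [dd] using q0
    rw [tot, if_neg h2, if_neg h3, if_pos h0, out]
    rw [dec_dig e ((2+3)%4) _ s0 (by simpa [dd] using q1), dec_dig e 2 _ s1 q2,
      dec_dig e ((2+1)%4) _ s2 q3]
  · -- r = 3 : digits s2 at 0, 0 at 1, s0 at 2, s1 at 3
    obtain ⟨q0, q1, q2, q3⟩ := dig4 (n+1) (dig e s2) 0 (dig e s0) (dig e s1)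
      (by omega) b2 (by omega) b0 b1
    have hm : dig e s0 * (n+1)^((3+3)%4) + dig e s1 * (n+1)^3 + dig e s2 * (n+1)^((3+1)%4)
        = dig e s2 + 0 * (n+1) + dig e s0 * (n+1)^2 + dig e s1 * (n+1)^3 := by norm_num; try ring
    rw [hm]
    set m := dig e s2 + 0 * (n+1) + dig e s0 * (n+1)^2 + dig e s1 * (n+1)^3 with hmdef
    have h2 : dd n 2 m ≠ 0 := by show ¬ (m / (n+1)^2 % (n+1) = 0); rw [q2]; omega
    have h3 : dd n 3 m ≠ 0 := by show ¬ (m / (n+1)^3 % (n+1) = 0); rw [q3]; omega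
    have h0 : dd n 0 m ≠ 0 := by
      have hq : dd n 0 m = dig e s2 := by simpa [dd] using q0
      rw [hq]; omega
    rw [tot, if_neg h2, if_neg h3, if_neg h0, out]
    rw [dec_dig e ((3+3)%4) _ s0 q2, dec_dig e 3 _ s1 q3,
      dec_dig e ((3+1)%4) _ s2 (by simpa [dd] using q0)]

end TotSim

/-- For every 1D CA `A = (S^ℤ, F)` of radius 1 on a finite alphabet
`S`, there exist a finite set `T ⊂ ℕ`, a 1D radius-1 CA `B = (T^ℤ, G)` whose local rule
`g : T³ → T` is totalistic (its value depends only on the sum of its inputs), and an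
injective continuous map `E : S^ℤ → T^ℤ` with `E ∘ σ_{4v} = σ_{4v} ∘ E` for all
`v ∈ ℤ` and `G ∘ E = E ∘ F`.  (Configurations over `T` are realized as maps `ℤ → ℕ`
taking values in `T`, with `G` induced by `g` cellwise.) -/
theorem totalistic_simulation (S : Type) [Finite S]
    [TopologicalSpace S] [DiscreteTopology S]
    (f : S → S → S → S) (F : (ℤ → S) → ℤ → S)
    (hF : ∀ (c : ℤ → S) (i : ℤ), F c i = f (c (i - 1)) (c i) (c (i + 1))) :
    ∃ (T : Finset ℕ) (g : ℕ → ℕ → ℕ → ℕ) (E : (ℤ → S) → ℤ → ℕ),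
      -- the local rule maps `T³` into `T`
      (∀ x ∈ T, ∀ y ∈ T, ∀ z ∈ T, g x y z ∈ T) ∧
      -- `g : T³ → T` is totalistic: it depends only on the sum of its arguments
      (∀ x ∈ T, ∀ y ∈ T, ∀ z ∈ T, ∀ x' ∈ T, ∀ y' ∈ T, ∀ z' ∈ T,
        x + y + z = x' + y' + z' → g x y z = g x' y' z') ∧
      -- `E` takes values in configurations over `T`
      (∀ (c : ℤ → S) (i : ℤ), E c i ∈ T) ∧
      Function.Injective E ∧
      Continuous E ∧
      -- `E ∘ σ_{4v} = σ_{4v} ∘ E`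
      (∀ (v : ℤ) (c : ℤ → S),
        (E fun i => c (4 * v + i)) = fun i => E c (4 * v + i)) ∧
      -- `G ∘ E = E ∘ F`, where `G(x)(i) = g(x(i−1), x(i), x(i+1))`
      (∀ c : ℤ → S,
        (fun i => g (E c (i - 1)) (E c i) (E c (i + 1))) = E (F c)) := by
  rcases isEmpty_or_nonempty S with hS | hS
  · -- S empty: configurations don't exist
    have hempty : IsEmpty (ℤ → S) := ⟨fun c => hS.elim (c 0)⟩
    refine ⟨∅, fun _ _ _ => 0, fun _ _ => 0, ?_, ?_, ?_, ?_, ?_, ?_, ?_⟩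
    · intro x hx; exact absurd hx (Finset.notMem_empty x)
    · intro x hx; exact absurd hx (Finset.notMem_empty x)
    · intro c; exact hempty.elim c
    · intro c c' _; exact hempty.elim c
    · exact continuous_const
    · intro v c; exact hempty.elim c
    · intro c; exact hempty.elim c
  · obtain ⟨n, ⟨e⟩⟩ := Finite.exists_equiv_fin S
    refine ⟨TotSim.T n, fun x y z => TotSim.tot e f (x + y + z),
      fun c j => TotSim.dig e (c j) * (n+1) ^ (j % 4).toNat, ?_, ?_, ?_, ?_, ?_, ?_, ?_⟩
    · intro x _ y _ z _; exact TotSim.tot_mem e f _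
    · intro x _ y _ z _ x' _ y' _ z' _ hs
      show TotSim.tot e f (x + y + z) = TotSim.tot e f (x' + y' + z')
      rw [hs]
    · intro c i
      exact TotSim.mem_T_of _ _ (e (c i)).isLt (by omega)
    · intro c c' hcc
      funext i
      have h1 := congrFun hcc i
      simp only at h1
      have h2 : TotSim.dig e (c i) = TotSim.dig e (c' i) :=
        Nat.eq_of_mul_eq_mul_right (Nat.pow_pos (Nat.succ_pos n)) h1
      have h3 : e (c i) = e (c' i) := Fin.ext (by
        have := h2
        unfold TotSim.dig at this
        omega)
      exact e.injective h3
    · refine continuous_pi fun j => ?_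
      exact Continuous.comp (continuous_of_discreteTopology
        (f := fun s : S => TotSim.dig e s * (n+1) ^ (j % 4).toNat)) (continuous_apply j)
    · intro v c
      funext i
      simp only
      have : (i % 4).toNat = ((4 * v + i) % 4).toNat := by omega
      rw [this]
    · intro c
      funext i
      simp only
      have hm1 : ((i - 1) % 4).toNat = ((i % 4).toNat + 3) % 4 := by omega
      have hp1 : ((i + 1) % 4).toNat = ((i % 4).toNat + 1) % 4 := by omega
      rw [hm1, hp1, hF]
      exact TotSim.key e f (c (i - 1)) (c i) (c (i + 1)) ((i % 4).toNat) (by omega)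
end

section
/- Rule 76 globally simulates Rule 4: let F, G : {0,1}^ℤ → {0,1}^ℤ be the global rules of the elementary cellular automata Rule 4 and Rule 76, i.e., F(c)(i) = f(c(i−1), c(i), c(i+1)) where f(0,1,0) = 1 and f = 0 on all other triples, and G(c)(i) = g(c(i−1), c(i), c(i+1)) where g(1,1,1) = 0 and g(x,y,z) = y on all other triples. Define E : {0,1}^ℤ → {0,1}^ℤ by E(c)(2i) = E(c)(2i+1) = c(i) for all i ∈ ℤ, and D : {0,1}^ℤ → {0,1}^ℤ by D(c)(i) = 1 if c(2i) = c(2i+1) = 1 and D(c)(i) = 0 otherwise. Then for every c ∈ {0,1}^ℤ and every n ∈ ℕ: D(G^{2n}(E(c))) = F^n(c). -/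
/-!
Both global rules are idempotent, by a finite check on the local rules: a Rule 4 image has no
two adjacent ones, and a Rule 76 image contains no block `111`, and on such configurations each
rule acts as the identity. Hence `G^{2n} = G` and `F^n = F` for `n ≥ 1`, and it remains to check
one step: on an encoded configuration, Rule 76 keeps the left copy of a one iff its left
neighbour is zero and the right copy iff its right neighbour is zero, so both copies survive
exactly when Rule 4 produces a one.
-/

/-- Local rule of the elementary CA Rule 4: `f(0,1,0) = 1` and `f = 0` otherwise. -/
def rule4 (x y z : Bool) : Bool := !x && y && !z

/-- Local rule of the elementary CA Rule 76: `g(1,1,1) = 0` and `g(x,y,z) = y`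
otherwise. -/
def rule76 (x y z : Bool) : Bool := if x && y && z then false else y

/-- Global rule of Rule 4. -/
def F4 (c : ℤ → Bool) : ℤ → Bool := fun i => rule4 (c (i - 1)) (c i) (c (i + 1))

/-- Global rule of Rule 76. -/
def F76 (c : ℤ → Bool) : ℤ → Bool := fun i => rule76 (c (i - 1)) (c i) (c (i + 1))

/-- The decoder `D`: `D(c)(i) = 1` iff `c(2i) = c(2i+1) = 1`. -/
def Dec (c : ℤ → Bool) : ℤ → Bool := fun i => c (2 * i) && c (2 * i + 1)

def globalRule {α : Type*} (f : α → α → α → α) (c : ℤ → α) : ℤ → α :=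
  fun i => f (c (i - 1)) (c i) (c (i + 1))

theorem globalRule_idempotent {α : Type*} {f : α → α → α → α}
    (hf : ∀ a b c d e, f (f a b c) (f b c d) (f c d e) = f b c d) (c : ℤ → α) :
    globalRule f (globalRule f c) = globalRule f c := by
  funext i
  simp only [globalRule, sub_add_cancel, add_sub_cancel_right, hf]

theorem iterate_succ_apply_of_idempotent {α : Type*} {f : α → α} (hf : ∀ x, f (f x) = f x)
    (x : α) (n : ℕ) : f^[n + 1] x = f x := by
  rw [Function.iterate_succ_apply]
  exact Function.IsFixedPt.iterate (hf x) n

theorem rule4_idempotent (a b c d e : Bool) :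
    rule4 (rule4 a b c) (rule4 b c d) (rule4 c d e) = rule4 b c d := by
  cases a <;> cases b <;> cases c <;> cases d <;> cases e <;> rfl

theorem rule76_idempotent (a b c d e : Bool) :
    rule76 (rule76 a b c) (rule76 b c d) (rule76 c d e) = rule76 b c d := by
  cases a <;> cases b <;> cases c <;> cases d <;> cases e <;> rfl

theorem iterate_F4_succ (c : ℤ → Bool) (n : ℕ) : F4^[n + 1] c = F4 c :=
  iterate_succ_apply_of_idempotent (globalRule_idempotent rule4_idempotent) c n

theorem iterate_F76_succ (c : ℤ → Bool) (n : ℕ) : F76^[n + 1] c = F76 c :=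
  iterate_succ_apply_of_idempotent (globalRule_idempotent rule76_idempotent) c n

section Encoding

variable {e c : ℤ → Bool} (he : ∀ i, e (2 * i) = c i ∧ e (2 * i + 1) = c i)
include he

theorem Dec_of_doubled : Dec e = c := by
  funext i
  simp only [Dec, (he i).1, (he i).2, Bool.and_self]

theorem F76_of_doubled_even (i : ℤ) : F76 e (2 * i) = (c i && !c (i - 1)) := by
  have hleft : 2 * i - 1 = 2 * (i - 1) + 1 := by ring
  simp only [F76, hleft, (he (i - 1)).2, (he i).1, (he i).2]
  cases c (i - 1) <;> cases c i <;> rfl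

theorem F76_of_doubled_odd (i : ℤ) : F76 e (2 * i + 1) = (c i && !c (i + 1)) := by
  have hright : 2 * i + 1 + 1 = 2 * (i + 1) := by ring
  simp only [F76, add_sub_cancel_right, hright, (he i).1, (he i).2, (he (i + 1)).1]
  cases c i <;> cases c (i + 1) <;> rfl

theorem Dec_F76_of_doubled : Dec (F76 e) = F4 c := by
  funext i
  simp only [Dec, F4, F76_of_doubled_even he, F76_of_doubled_odd he]
  cases c (i - 1) <;> cases c i <;> cases c (i + 1) <;> rfl

end Encoding

/-- Rule 76 globally simulates Rule 4: with the encoder `E` given by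
`E(c)(2i) = E(c)(2i+1) = c(i)` and the decoder `D` above, for every configuration `c`
and every `n ∈ ℕ` one has `D(G^{2n}(E(c))) = F^n(c)`. -/
theorem rule76_simulates_rule4
    (E : (ℤ → Bool) → ℤ → Bool)
    (hE : ∀ (c : ℤ → Bool) (i : ℤ),
      E c (2 * i) = c i ∧ E c (2 * i + 1) = c i) :
    ∀ (c : ℤ → Bool) (n : ℕ), Dec (F76^[2 * n] (E c)) = F4^[n] c := by
  intro c n
  cases n with
  | zero => exact Dec_of_doubled (hE c)
  | succ m =>
    rw [show 2 * (m + 1) = (2 * m + 1) + 1 by ring, iterate_F76_succ, iterate_F4_succ]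
    exact Dec_F76_of_doubled (hE c)
end
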